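/- Fix blocks B₁, …, B_D and λ ≥ 0, and let χ : ℤ → Fin D be any block sequence with concatenated resonator data (v_i, ℓ_i, s_i)_{i∈ℤ}. Let P^λ : ℤ → SL(2,ℝ), P^λ(i) = P^λ_{ℓ_i,s_i,v_i}, be the resonator propagation matrix cocycle, and let 𝒫^λ : ℤ → SL(2,ℝ), 𝒫^λ(j) = 𝒫^λ_{B_{χ(j)}}, be the block propagation matrix cocycle. Then 𝒫^λ is uniformly hyperbolic if and only if P^λ is uniformly hyperbolic. -/

import Mathlib

open Matrix

noncomputable section

/-- Euclidean plane. -/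
abbrev E2 := EuclideanSpace ℝ (Fin 2)

/-- The real projective line, as the projectivization of `ℝ²`. -/
abbrev RP1 := Projectivization ℝ E2

/-- The linear map on `E2` induced by a `2×2` matrix. -/
def matLin (A : Matrix (Fin 2) (Fin 2) ℝ) : E2 →ₗ[ℝ] E2 :=
  (WithLp.linearEquiv 2 ℝ (Fin 2 → ℝ)).symm.toLinearMap ∘ₗ
    A.mulVecLin ∘ₗ (WithLp.linearEquiv 2 ℝ (Fin 2 → ℝ)).toLinearMap

/-- Matrix-vector multiplication on `E2`. -/
def mulVecE (A : Matrix (Fin 2) (Fin 2) ℝ) (v : E2) : E2 := matLin A v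

/-- The action of an (invertible) matrix on the projective line `RP1`
(junk value if the matrix is not injective). -/
def matAct (A : Matrix (Fin 2) (Fin 2) ℝ) (x : RP1) : RP1 :=
  open scoped Classical in
  if h : Function.Injective (matLin A) then Projectivization.map (matLin A) h x else x

/-- The (Euclidean) operator norm of a `2×2` matrix. -/
def matOpNorm (A : Matrix (Fin 2) (Fin 2) ℝ) : ℝ :=
  ‖LinearMap.toContinuousLinearMap (matLin A)‖

/-- The metric `d([u],[w]) = √(1 − (⟨u,w⟩/(‖u‖‖w‖))²)` on `RP1`. -/
def projDist (x y : RP1) : ℝ :=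
  Real.sqrt (1 - ((inner ℝ x.rep y.rep : ℝ) / (‖x.rep‖ * ‖y.rep‖)) ^ 2)

/-- Forward cocycle iterates: `fwd A n i = A(i+n−1)⋯A(i)`. -/
def fwd (A : ℤ → Matrix (Fin 2) (Fin 2) ℝ) : ℕ → ℤ → Matrix (Fin 2) (Fin 2) ℝ
  | 0, _ => 1
  | n + 1, i => A (i + n) * fwd A n i

/-- Backward cocycle iterates: `bwd A n i = A(i−n)⁻¹⋯A(i−1)⁻¹`. -/
def bwd (A : ℤ → Matrix (Fin 2) (Fin 2) ℝ) : ℕ → ℤ → Matrix (Fin 2) (Fin 2) ℝ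
  | 0, _ => 1
  | n + 1, i => bwd A n (i - 1) * (A (i - 1))⁻¹

/-- `w` is a nonzero vector spanning the line `x ∈ RP1`. -/
def SpansLine (w : E2) (x : RP1) : Prop := ∃ h : w ≠ 0, Projectivization.mk ℝ w h = x

/-- Uniform hyperbolicity witnessed by unstable/stable directions `u`, `s`. -/
def IsUHWith (P : ℤ → Matrix (Fin 2) (Fin 2) ℝ) (u s : ℤ → RP1) : Prop :=
  (∀ i : ℤ, matAct (P i) (u i) = u (i + 1) ∧ matAct (P i) (s i) = s (i + 1)) ∧
  ∃ C > 0, ∃ η > 1, ∀ i : ℤ, ∀ n : ℕ,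
    (∀ w : E2, ‖w‖ = 1 → SpansLine w (u i) → ‖mulVecE (bwd P n i) w‖ ≤ C / η ^ n) ∧
    (∀ w : E2, ‖w‖ = 1 → SpansLine w (s i) → ‖mulVecE (fwd P n i) w‖ ≤ C / η ^ n)

/-- Uniform hyperbolicity of a cocycle. -/
def IsUH (P : ℤ → Matrix (Fin 2) (Fin 2) ℝ) : Prop := ∃ u s, IsUHWith P u s

/-- Dominated splitting (DS1)–(DS4). -/
def IsDS (T : ℤ → Matrix (Fin 2) (Fin 2) ℝ) : Prop :=
  ∃ u s : ℤ → RP1,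
    (∀ i : ℤ, matAct (T i) (u i) = u (i + 1) ∧ matAct (T i) (s i) = s (i + 1)) ∧
    ∃ N : ℕ, 1 ≤ N ∧
      (∃ η > 1, ∀ i : ℤ, ∀ w w' : E2, ‖w‖ = 1 → ‖w'‖ = 1 →
        SpansLine w (u i) → SpansLine w' (s i) →
        ‖mulVecE (fwd T N i) w‖ > η * ‖mulVecE (fwd T N i) w'‖) ∧
      (∃ δ > 0, ∀ i : ℤ, projDist (u i) (s i) > δ) ∧
      (∃ c > 0, ∀ i : ℤ, c ≤ matOpNorm (fwd T N i))

/-- A block: a nonempty finite list of triples `(v, ℓ, s)` of positive reals. -/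
def Block : Type :=
  {L : List (ℝ × ℝ × ℝ) // L ≠ [] ∧ ∀ t ∈ L, 0 < t.1 ∧ 0 < t.2.1 ∧ 0 < t.2.2}

/-- The single-resonator propagation matrix `P^λ_{ℓ,s,v}`. -/
def propMat (lam ℓ s v : ℝ) : Matrix (Fin 2) (Fin 2) ℝ :=
  !![1 - s * ℓ * lam / v ^ 2, s; -(ℓ * lam / v ^ 2), 1]

/-- Propagation matrix of a resonator triple `(v, ℓ, s)`. -/
def propOf (lam : ℝ) (t : ℝ × ℝ × ℝ) : Matrix (Fin 2) (Fin 2) ℝ :=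
  propMat lam t.2.1 t.2.2 t.1

/-- The block propagation matrix `𝒫^λ_B = P^λ_{ℓ_L,s_L,v_L} ⋯ P^λ_{ℓ₁,s₁,v₁}`. -/
def blockMat (lam : ℝ) (Bd : Block) : Matrix (Fin 2) (Fin 2) ℝ :=
  ((Bd.1.map (propOf lam)).reverse).prod

/-- `data` (with block-start indices `st`) is the bi-infinite concatenation of the
blocks `B (χ j)`. -/
def IsConcat {D : ℕ} (B : Fin D → Block) (χ : ℤ → Fin D)
    (data : ℤ → ℝ × ℝ × ℝ) (st : ℤ → ℤ) : Prop :=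
  st 0 = 0 ∧ (∀ j : ℤ, st (j + 1) = st j + ((B (χ j)).1.length : ℤ)) ∧
    ∀ (j : ℤ) (k : ℕ) (hk : k < (B (χ j)).1.length),
      data (st j + (k : ℤ)) = (B (χ j)).1.get ⟨k, hk⟩


/-! The block cocycle is the resonator cocycle `P` read off at the block boundaries `st j`,
so `n` block steps are a product of at least `n` resonator steps: restricting the invariant
directions of `P` to the boundaries proves that `P` uniformly hyperbolic implies the block
cocycle is, with the same constants. Conversely, the directions of the block cocycle spread by
invariance to every site. Since blocks have at most `M` resonators and the one-step matrices
and their inverses are uniformly bounded, an orbit segment of `n` resonator steps contains at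
least `n / M - 2` whole blocks, which gives contraction at rate `η ^ (1 / M)`. The expanding
direction is the contracting direction of the time-reversed cocycle `k ↦ P (-k - 1)⁻¹`. -/

local notation "Mat₂" => Matrix (Fin 2) (Fin 2) ℝ

lemma matLin_one : matLin 1 = LinearMap.id := by
  ext w : 1
  simp [matLin]

lemma matLin_mul (A B : Mat₂) : matLin (A * B) = matLin A ∘ₗ matLin B := by
  ext w : 1
  simp [matLin, Matrix.mulVecLin_mul]

lemma mulVecE_one (w : E2) : mulVecE 1 w = w := by simp [mulVecE, matLin_one]

lemma mulVecE_mul (A B : Mat₂) (w : E2) : mulVecE (A * B) w = mulVecE A (mulVecE B w) := by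
  simp [mulVecE, matLin_mul]

lemma norm_mulVecE_le (A : Mat₂) (w : E2) : ‖mulVecE A w‖ ≤ matOpNorm A * ‖w‖ :=
  (LinearMap.toContinuousLinearMap (matLin A)).le_opNorm w

lemma matOpNorm_nonneg (A : Mat₂) : 0 ≤ matOpNorm A := norm_nonneg _

lemma matOpNorm_one_le : matOpNorm 1 ≤ 1 := by
  rw [matOpNorm, matLin_one]
  exact ContinuousLinearMap.norm_id_le

lemma matOpNorm_mul_le (A B : Mat₂) : matOpNorm (A * B) ≤ matOpNorm A * matOpNorm B := by
  have h : LinearMap.toContinuousLinearMap (matLin (A * B)) =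
      (LinearMap.toContinuousLinearMap (matLin A)).comp
        (LinearMap.toContinuousLinearMap (matLin B)) := by
    ext w
    simp [matLin_mul]
  rw [matOpNorm, h]
  exact ContinuousLinearMap.opNorm_comp_le _ _

lemma injective_matLin {A : Mat₂} (hA : IsUnit A) : Function.Injective (matLin A) := by
  intro v w h
  simpa [← LinearMap.comp_apply, ← matLin_mul,
    Matrix.nonsing_inv_mul A ((Matrix.isUnit_iff_isUnit_det A).mp hA), matLin_one]
    using congrArg (matLin A⁻¹) h

lemma matAct_mk {A : Mat₂} (hA : IsUnit A) {w : E2} (hw : w ≠ 0) (hAw : mulVecE A w ≠ 0) :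
    matAct A (Projectivization.mk ℝ w hw) = Projectivization.mk ℝ (mulVecE A w) hAw := by
  rw [matAct, dif_pos (injective_matLin hA)]
  exact Projectivization.map_mk _ _ w hw

lemma mulVecE_ne_zero {A : Mat₂} (hA : IsUnit A) {w : E2} (hw : w ≠ 0) : mulVecE A w ≠ 0 :=
  fun h => hw (injective_matLin hA (h.trans (map_zero _).symm))

lemma matAct_one (x : RP1) : matAct 1 x = x := by
  induction x using Projectivization.ind with
  | h w hw =>
    rw [matAct_mk isUnit_one hw (mulVecE_ne_zero isUnit_one hw)]
    simp only [mulVecE_one]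

lemma matAct_mul {A B : Mat₂} (hA : IsUnit A) (hB : IsUnit B) (x : RP1) :
    matAct (A * B) x = matAct A (matAct B x) := by
  induction x using Projectivization.ind with
  | h w hw =>
    have hBw := mulVecE_ne_zero hB hw
    rw [matAct_mk (hA.mul hB) hw (mulVecE_ne_zero (hA.mul hB) hw), matAct_mk hB hw hBw,
      matAct_mk hA hBw (mulVecE_ne_zero hA hBw)]
    simp only [mulVecE_mul]

lemma matAct_inv_of_matAct_eq {A : Mat₂} (hA : IsUnit A) {x y : RP1} (h : matAct A x = y) :
    matAct A⁻¹ y = x := by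
  rw [← h, ← matAct_mul (Matrix.isUnit_nonsing_inv_iff.mpr hA) hA,
    Matrix.nonsing_inv_mul A ((Matrix.isUnit_iff_isUnit_det A).mp hA), matAct_one]

lemma SpansLine.ne_zero {w : E2} {x : RP1} (h : SpansLine w x) : w ≠ 0 := h.1

lemma SpansLine.matAct {A : Mat₂} (hA : IsUnit A) {w : E2} {x : RP1} (h : SpansLine w x) :
    SpansLine (mulVecE A w) (matAct A x) := by
  obtain ⟨hw, rfl⟩ := h
  exact ⟨mulVecE_ne_zero hA hw, (matAct_mk hA hw _).symm⟩

lemma SpansLine.smul {w : E2} {x : RP1} {c : ℝ} (hc : c ≠ 0) (h : SpansLine w x) :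
    SpansLine (c • w) x := by
  obtain ⟨hw, rfl⟩ := h
  exact ⟨smul_ne_zero hc hw, (Projectivization.mk_eq_mk_iff' ℝ _ _ _ hw).2 ⟨c, rfl⟩⟩

lemma norm_mulVecE_le_of_forall_norm_eq_one {A : Mat₂} {x : RP1} {c : ℝ}
    (h : ∀ w : E2, ‖w‖ = 1 → SpansLine w x → ‖mulVecE A w‖ ≤ c) {w : E2}
    (hw : SpansLine w x) : ‖mulVecE A w‖ ≤ c * ‖w‖ := by
  have hn : ‖w‖ ≠ 0 := norm_ne_zero_iff.2 hw.ne_zero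
  have hunit : ‖‖w‖⁻¹ • w‖ = 1 := by rw [norm_smul, norm_inv, norm_norm, inv_mul_cancel₀ hn]
  calc ‖mulVecE A w‖ = ‖w‖ * ‖mulVecE A (‖w‖⁻¹ • w)‖ := by
        rw [mulVecE, mulVecE, map_smul, norm_smul, norm_inv, norm_norm, mul_inv_cancel_left₀ hn]
    _ ≤ ‖w‖ * c := by gcongr; exact h _ hunit (hw.smul (inv_ne_zero hn))
    _ = c * ‖w‖ := mul_comm _ _

section Cocycle

variable (P : ℤ → Mat₂)

lemma fwd_one (i : ℤ) : fwd P 1 i = P i := by simp [fwd]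

lemma fwd_add (m n : ℕ) (i : ℤ) : fwd P (m + n) i = fwd P m (i + n) * fwd P n i := by
  induction m with
  | zero => simp [fwd]
  | succ m ih =>
    rw [Nat.add_right_comm, fwd, ih, fwd, mul_assoc]
    congr 2
    push_cast
    ring

variable {P}

lemma isUnit_fwd (hP : ∀ i, IsUnit (P i)) (n : ℕ) (i : ℤ) : IsUnit (fwd P n i) := by
  induction n with
  | zero => exact isUnit_one
  | succ n ih => exact (hP _).mul ih

lemma bwd_mul_fwd (hP : ∀ i, IsUnit (P i)) (n : ℕ) (i : ℤ) : bwd P n (i + n) * fwd P n i = 1 := by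
  induction n with
  | zero => simp [fwd, bwd]
  | succ n ih =>
    have hinv := Matrix.nonsing_inv_mul _ ((Matrix.isUnit_iff_isUnit_det _).mp (hP (i + n)))
    rw [bwd, fwd, show i + ((n + 1 : ℕ) : ℤ) - 1 = i + n by push_cast; ring, mul_assoc,
      ← mul_assoc (P (i + n))⁻¹, hinv, one_mul, ih]

lemma bwd_eq_inv_fwd (hP : ∀ i, IsUnit (P i)) (n : ℕ) (i : ℤ) :
    bwd P n i = (fwd P n (i - n))⁻¹ := by
  simpa using (Matrix.inv_eq_left_inv (bwd_mul_fwd hP n (i - n))).symm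

lemma matOpNorm_fwd_le {K : ℝ} (hK1 : 1 ≤ K) (hK : ∀ i, matOpNorm (P i) ≤ K) (n : ℕ) (i : ℤ) :
    matOpNorm (fwd P n i) ≤ K ^ n := by
  induction n with
  | zero => simpa [fwd] using matOpNorm_one_le
  | succ n ih =>
    calc matOpNorm (fwd P (n + 1) i) ≤ matOpNorm (P (i + n)) * matOpNorm (fwd P n i) :=
          matOpNorm_mul_le _ _
      _ ≤ K * K ^ n := by gcongr; exacts [matOpNorm_nonneg _, hK _]
      _ = K ^ (n + 1) := (pow_succ' K n).symm

lemma matAct_fwd (hP : ∀ i, IsUnit (P i)) {u : ℤ → RP1}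
    (hu : ∀ i, matAct (P i) (u i) = u (i + 1)) (n : ℕ) (i : ℤ) :
    matAct (fwd P n i) (u i) = u (i + n) := by
  induction n with
  | zero => simpa [fwd] using matAct_one (u i)
  | succ n ih =>
    rw [fwd, matAct_mul (hP _) (isUnit_fwd hP n i), ih, hu]
    push_cast
    ring_nf

end Cocycle

/-- The cocycle `P` run backwards in time; the shift by one makes its forward iterates the
backward iterates of `P`. -/
def cocycleReverse (P : ℤ → Mat₂) (k : ℤ) : Mat₂ := (P (-k - 1))⁻¹

section Reverse

variable {P : ℤ → Mat₂}

lemma bwd_succ' (n : ℕ) (i : ℤ) : bwd P (n + 1) i = (P (i - n - 1))⁻¹ * bwd P n i := by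
  induction n generalizing i with
  | zero => simp [bwd]
  | succ n ih =>
    rw [bwd, ih, bwd, mul_assoc]
    push_cast
    ring_nf

lemma fwd_cocycleReverse (n : ℕ) (i : ℤ) : fwd (cocycleReverse P) n (-i) = bwd P n i := by
  induction n with
  | zero => rfl
  | succ n ih =>
    rw [fwd, ih, bwd_succ', cocycleReverse]
    ring_nf

lemma isUnit_cocycleReverse (hP : ∀ i, IsUnit (P i)) (k : ℤ) : IsUnit (cocycleReverse P k) :=
  Matrix.isUnit_nonsing_inv_iff.mpr (hP _)

lemma matAct_cocycleReverse (hP : ∀ i, IsUnit (P i)) {u : ℤ → RP1}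
    (hu : ∀ i, matAct (P i) (u i) = u (i + 1)) (k : ℤ) :
    matAct (cocycleReverse P k) (u (-k)) = u (-(k + 1)) := by
  apply matAct_inv_of_matAct_eq (hP _)
  rw [← neg_add', hu, neg_add', sub_add_cancel]

end Reverse

/-- The transfer matrix `P (b - 1) ⋯ P a` from site `a` to site `b` (the identity if `b ≤ a`). -/
def transfer (P : ℤ → Mat₂) (a b : ℤ) : Mat₂ := fwd P (b - a).toNat a

section Transfer

variable {P : ℤ → Mat₂} {a b c : ℤ}

lemma fwd_eq_transfer (n : ℕ) (i : ℤ) : fwd P n i = transfer P i (i + n) := by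
  simp [transfer]

lemma transfer_self (a : ℤ) : transfer P a a = 1 := by simp [transfer, fwd]

lemma transfer_mul_transfer (hab : a ≤ b) (hbc : b ≤ c) :
    transfer P b c * transfer P a b = transfer P a c := by
  obtain ⟨m, rfl⟩ := Int.le.dest hab
  obtain ⟨n, rfl⟩ := Int.le.dest hbc
  simp only [transfer, add_sub_cancel_left, add_assoc, Int.toNat_natCast, ← Nat.cast_add]
  rw [add_comm m n, fwd_add, add_sub_add_left_eq_sub]
  simp

lemma transfer_succ_right (hab : a ≤ b) : transfer P a (b + 1) = P b * transfer P a b := by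
  rw [← transfer_mul_transfer hab (Int.le_add_one le_rfl), transfer, add_sub_cancel_left,
    Int.toNat_one, fwd_one]

lemma isUnit_transfer (hP : ∀ i, IsUnit (P i)) (a b : ℤ) : IsUnit (transfer P a b) :=
  isUnit_fwd hP _ _

lemma matAct_transfer (hP : ∀ i, IsUnit (P i)) {u : ℤ → RP1}
    (hu : ∀ i, matAct (P i) (u i) = u (i + 1)) (hab : a ≤ b) :
    matAct (transfer P a b) (u a) = u b := by
  rw [transfer, matAct_fwd hP hu, Int.toNat_of_nonneg (sub_nonneg.2 hab), add_sub_cancel]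

lemma transfer_cocycleReverse : transfer (cocycleReverse P) (-b) (-a) = bwd P (b - a).toNat b := by
  rw [transfer, neg_sub_neg, fwd_cocycleReverse]

lemma norm_mulVecE_transfer_le {K : ℝ} {M : ℕ} (hK1 : 1 ≤ K) (hK : ∀ i, matOpNorm (P i) ≤ K)
    (hba : b - a ≤ M) (w : E2) : ‖mulVecE (transfer P a b) w‖ ≤ K ^ M * ‖w‖ :=
  calc ‖mulVecE (transfer P a b) w‖ ≤ K ^ (b - a).toNat * ‖w‖ :=
        (norm_mulVecE_le _ w).trans (by gcongr; exact matOpNorm_fwd_le hK1 hK _ _)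
    _ ≤ K ^ M * ‖w‖ := by gcongr; omega

end Transfer

section Partition

variable {st : ℤ → ℤ} {a b : ℤ}

lemma sub_le_sub_apply_of_strictMono (hst : StrictMono st) (hab : a ≤ b) :
    b - a ≤ st b - st a := by
  induction b, hab using Int.leInduction with
  | base => simp
  | succ b _ ih => have := hst (lt_add_one b); omega

lemma sub_apply_le_mul_sub {M : ℕ} (hgap : ∀ j, st (j + 1) ≤ st j + M) (hab : a ≤ b) :
    st b - st a ≤ M * (b - a) := by
  induction b, hab using Int.leInduction with
  | base => simp
  | succ b _ ih => have := hgap b; linarith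

lemma exists_apply_le_lt (hst : StrictMono st) (i : ℤ) : ∃ j, st j ≤ i ∧ i < st (j + 1) := by
  have hbdd : ∃ b, ∀ j, st j ≤ i → j ≤ b := ⟨|i - st 0|, fun j hj => by
    rcases le_total 0 j with h | h
    · have := sub_le_sub_apply_of_strictMono hst h
      have := le_abs_self (i - st 0)
      omega
    · have := abs_nonneg (i - st 0)
      omega⟩
  have hex : ∃ j, st j ≤ i := ⟨-|i - st 0|, by
    have := sub_le_sub_apply_of_strictMono hst (neg_nonpos.2 (abs_nonneg (i - st 0)))
    have := neg_abs_le (i - st 0)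
    omega⟩
  obtain ⟨j, hj, hmax⟩ := Int.exists_greatest_of_bdd hbdd hex
  exact ⟨j, hj, lt_of_not_ge fun h => (hmax _ h).not_gt (lt_add_one j)⟩

end Partition

def blockCocycle (P : ℤ → Mat₂) (st : ℤ → ℤ) (j : ℤ) : Mat₂ := transfer P (st j) (st (j + 1))

section Block

variable {P : ℤ → Mat₂} {st : ℤ → ℤ}

lemma fwd_blockCocycle (hst : Monotone st) (n : ℕ) (j : ℤ) :
    fwd (blockCocycle P st) n j = transfer P (st j) (st (j + n)) := by
  induction n with
  | zero => simp [fwd, transfer_self]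
  | succ n ih =>
    rw [fwd, ih, blockCocycle, transfer_mul_transfer (hst (by omega)) (hst (by omega))]
    push_cast
    ring_nf

lemma isUnit_blockCocycle (hP : ∀ i, IsUnit (P i)) (j : ℤ) : IsUnit (blockCocycle P st j) :=
  isUnit_transfer hP _ _

lemma bwd_blockCocycle (hP : ∀ i, IsUnit (P i)) (hst : Monotone st) (n : ℕ) (j : ℤ) :
    bwd (blockCocycle P st) n j = bwd P (st j - st (j - n)).toNat (st j) := by
  have hle : st (j - n) ≤ st j := hst (by omega)
  rw [bwd_eq_inv_fwd (isUnit_blockCocycle hP), bwd_eq_inv_fwd hP, fwd_blockCocycle hst,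
    sub_add_cancel, transfer, Int.toNat_of_nonneg (sub_nonneg.2 hle), sub_sub_cancel]

lemma transfer_cocycleReverse_eq_bwd_blockCocycle (hP : ∀ i, IsUnit (P i)) (hst : Monotone st)
    (n : ℕ) (j : ℤ) :
    transfer (cocycleReverse P) (-st (-j)) (-st (-(j + n))) = bwd (blockCocycle P st) n (-j) := by
  rw [transfer_cocycleReverse, bwd_blockCocycle hP hst, neg_add']

lemma exists_invariant_extension (hP : ∀ i, IsUnit (P i)) (hst : StrictMono st) {u' : ℤ → RP1}
    (hu' : ∀ j, matAct (blockCocycle P st j) (u' j) = u' (j + 1)) :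
    ∃ u : ℤ → RP1, (∀ i, matAct (P i) (u i) = u (i + 1)) ∧ ∀ j, u (st j) = u' j := by
  have hmove : ∀ i j (m : ℕ), st (j + m) ≤ i →
      matAct (transfer P (st j) i) (u' j) = matAct (transfer P (st (j + m)) i) (u' (j + m)) := by
    intro i j m hi
    rw [← transfer_mul_transfer (hst.monotone (by omega)) hi,
      matAct_mul (isUnit_transfer hP _ _) (isUnit_transfer hP _ _), ← fwd_blockCocycle hst.monotone,
      matAct_fwd (isUnit_blockCocycle hP) hu']
  have hindep : ∀ i j j', st j ≤ i → st j' ≤ i →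
      matAct (transfer P (st j) i) (u' j) = matAct (transfer P (st j') i) (u' j') := by
    intro i j j' hj hj'
    rcases le_total j j' with h | h
    · obtain ⟨m, rfl⟩ := Int.le.dest h
      exact hmove i j m hj'
    · obtain ⟨m, rfl⟩ := Int.le.dest h
      exact (hmove i j' m hj).symm
  choose J hJ using fun i => (exists_apply_le_lt hst i).imp fun _ h => h.1
  refine ⟨fun i => matAct (transfer P (st (J i)) i) (u' (J i)), fun i => ?_, fun j => ?_⟩
  · dsimp only
    rw [hindep (i + 1) (J (i + 1)) (J i) (hJ _) ((hJ i).trans (by omega)),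
      transfer_succ_right (hJ i), matAct_mul (hP i) (isUnit_transfer hP _ _)]
  · dsimp only
    rw [hindep (st j) (J (st j)) j (hJ _) le_rfl, transfer_self, matAct_one]

end Block

section Hyperbolicity

variable {P : ℤ → Mat₂} {st : ℤ → ℤ}

lemma norm_mulVecE_transfer_le_of_blockwise {s : ℤ → RP1} {M : ℕ} {K C η : ℝ}
    (hP : ∀ i, IsUnit (P i)) (hK1 : 1 ≤ K) (hK : ∀ i, matOpNorm (P i) ≤ K) (hst : Monotone st)
    (hC : 0 ≤ C) (hη : 0 ≤ η) (hs : ∀ i, matAct (P i) (s i) = s (i + 1))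
    (hblock : ∀ j (n : ℕ) (w : E2), SpansLine w (s (st j)) →
      ‖mulVecE (transfer P (st j) (st (j + n))) w‖ ≤ C / η ^ n * ‖w‖)
    {a b j : ℤ} {m : ℕ} (ha : a ≤ st j) (haM : st j - a ≤ M) (hb : st (j + m) ≤ b)
    (hbM : b - st (j + m) ≤ M) {w : E2} (hw : SpansLine w (s a)) :
    ‖mulVecE (transfer P a b) w‖ ≤ K ^ M * (C / η ^ m * (K ^ M * ‖w‖)) := by
  have hjm : st j ≤ st (j + m) := hst (by omega)
  have hspan : SpansLine (mulVecE (transfer P a (st j)) w) (s (st j)) :=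
    matAct_transfer hP hs ha ▸ hw.matAct (isUnit_transfer hP _ _)
  rw [← transfer_mul_transfer (ha.trans hjm) hb, ← transfer_mul_transfer ha hjm, mulVecE_mul,
    mulVecE_mul]
  calc _ ≤ K ^ M * ‖mulVecE (transfer P (st j) (st (j + m))) (mulVecE (transfer P a (st j)) w)‖ :=
        norm_mulVecE_transfer_le hK1 hK hbM _
    _ ≤ K ^ M * (C / η ^ m * ‖mulVecE (transfer P a (st j)) w‖) := by
        gcongr
        exact hblock _ _ _ hspan
    _ ≤ K ^ M * (C / η ^ m * (K ^ M * ‖w‖)) := by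
        gcongr
        exact norm_mulVecE_transfer_le hK1 hK haM w

theorem norm_mulVecE_fwd_mul_pow_le {s : ℤ → RP1} {M : ℕ} {K C η t : ℝ}
    (hP : ∀ i, IsUnit (P i)) (hK1 : 1 ≤ K) (hK : ∀ i, matOpNorm (P i) ≤ K)
    (hst : StrictMono st) (hgap : ∀ j, st (j + 1) ≤ st j + M)
    (hC : 0 ≤ C) (hη : 1 < η) (ht : 1 ≤ t) (htM : t ^ M = η)
    (hs : ∀ i, matAct (P i) (s i) = s (i + 1))
    (hblock : ∀ j (n : ℕ) (w : E2), SpansLine w (s (st j)) →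
      ‖mulVecE (transfer P (st j) (st (j + n))) w‖ ≤ C / η ^ n * ‖w‖)
    (i : ℤ) (n : ℕ) {w : E2} (hw : ‖w‖ = 1) (hsw : SpansLine w (s i)) :
    ‖mulVecE (fwd P n i) w‖ * t ^ n ≤ C * K ^ (2 * M) * η ^ 2 + K ^ M * η := by
  obtain ⟨j₀, hj₀, hij₀⟩ := exists_apply_le_lt hst i
  have hgap₀ := hgap j₀
  rw [fwd_eq_transfer]
  by_cases hshort : i + n < st (j₀ + 1)
  · calc ‖mulVecE (transfer P i (i + n)) w‖ * t ^ n ≤ K ^ M * t ^ M := by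
          gcongr
          · simpa [hw] using norm_mulVecE_transfer_le hK1 hK (M := M) (by omega) w
          · omega
      _ = K ^ M * η := by rw [htM]
      _ ≤ _ := le_add_of_nonneg_left (by positivity)
  -- the orbit segment covers the whole blocks `j₀ + 1, …, j₀ + m`
  obtain ⟨j₁, hj₁, hij₁⟩ := exists_apply_le_lt hst (i + n)
  have hj : j₀ + 1 < j₁ + 1 := hst.lt_iff_lt.1 (by omega)
  obtain ⟨m, rfl⟩ := Int.le.dest (show j₀ + 1 ≤ j₁ by omega)
  have hgap₁ := hgap (j₀ + 1 + m)
  have hn : n ≤ M * (m + 2) := by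
    have := sub_apply_le_mul_sub hgap (show j₀ + 1 ≤ j₀ + 1 + m by omega)
    zify
    linarith
  calc ‖mulVecE (transfer P i (i + n)) w‖ * t ^ n
      ≤ K ^ M * (C / η ^ m * (K ^ M * 1)) * η ^ (m + 2) := by
        gcongr ?_ * ?_
        · rw [← hw]
          exact norm_mulVecE_transfer_le_of_blockwise hP hK1 hK hst.monotone hC (by linarith) hs hblock
            (by omega) (by omega) hj₁ (by omega) hsw
        · calc t ^ n ≤ t ^ (M * (m + 2)) := pow_le_pow_right₀ ht hn
            _ = η ^ (m + 2) := by rw [pow_mul, htM]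
    _ = C * K ^ (2 * M) * η ^ 2 := by
        field_simp
        ring
    _ ≤ _ := le_add_of_nonneg_right (by positivity)

end Hyperbolicity

section Hyperbolicity

variable {P : ℤ → Mat₂} {st : ℤ → ℤ}

lemma isUHWith_blockCocycle (hP : ∀ i, IsUnit (P i)) (hst : StrictMono st) {u s : ℤ → RP1}
    (h : IsUHWith P u s) : IsUHWith (blockCocycle P st) (u ∘ st) (s ∘ st) := by
  obtain ⟨hinv, C, hC, η, hη, hbound⟩ := h
  have hdecay : ∀ {n k : ℕ}, n ≤ k → C / η ^ k ≤ C / η ^ n := fun hnk =>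
    div_le_div_of_nonneg_left hC.le (by positivity) (pow_le_pow_right₀ hη.le hnk)
  refine ⟨fun j => ⟨?_, ?_⟩, C, hC, η, hη, fun j n => ⟨fun w hw hwu => ?_, fun w hw hws => ?_⟩⟩
  · exact matAct_transfer hP (fun i => (hinv i).1) (hst.monotone (by omega))
  · exact matAct_transfer hP (fun i => (hinv i).2) (hst.monotone (by omega))
  · have := sub_le_sub_apply_of_strictMono hst (show j - n ≤ j by omega)
    rw [bwd_blockCocycle hP hst.monotone]
    exact ((hbound _ _).1 w hw hwu).trans (hdecay (by omega))
  · have := sub_le_sub_apply_of_strictMono hst (show j ≤ j + n by omega)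
    rw [fwd_blockCocycle hst.monotone]
    exact ((hbound _ _).2 w hw hws).trans (hdecay (by omega))

lemma isUH_of_isUH_blockCocycle (hP : ∀ i, IsUnit (P i)) {K : ℝ} (hK1 : 1 ≤ K)
    (hK : ∀ i, matOpNorm (P i) ≤ K) (hKinv : ∀ i, matOpNorm (P i)⁻¹ ≤ K)
    (hst : StrictMono st) {M : ℕ} (hgap : ∀ j, st (j + 1) ≤ st j + M)
    (h : IsUH (blockCocycle P st)) : IsUH P := by
  obtain ⟨u', s', hinv, C, hC, η, hη, hbound⟩ := h
  obtain ⟨u, hu, hu'⟩ := exists_invariant_extension hP hst fun j => (hinv j).1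
  obtain ⟨s, hs, hs'⟩ := exists_invariant_extension hP hst fun j => (hinv j).2
  have hM : M ≠ 0 := by have := hst (lt_add_one 0); have := hgap 0; omega
  set t := η ^ (M : ℝ)⁻¹
  have ht : 1 < t := Real.one_lt_rpow hη (by positivity)
  have htM : t ^ M = η := Real.rpow_inv_natCast_pow (by linarith) hM
  refine ⟨u, s, fun i => ⟨hu i, hs i⟩, C * K ^ (2 * M) * η ^ 2 + K ^ M * η, by positivity, t, ht, fun i n =>
    ⟨fun w hw hwu => (le_div_iff₀ (by positivity)).2 ?_,
      fun w hw hws => (le_div_iff₀ (by positivity)).2 ?_⟩⟩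
  · rw [← fwd_cocycleReverse]
    refine norm_mulVecE_fwd_mul_pow_le (isUnit_cocycleReverse hP) hK1 (fun _ => hKinv _)
      (st := fun j => -st (-j)) (fun a b hab => neg_lt_neg (hst (neg_lt_neg hab)))
      (fun j => by have := hgap (-j - 1); rw [sub_add_cancel] at this; rw [neg_add']; omega)
      hC.le hη ht.le htM (matAct_cocycleReverse hP hu) (fun j n w hw => ?_) (-i) n hw
      (by rwa [neg_neg])
    rw [transfer_cocycleReverse_eq_bwd_blockCocycle hP hst.monotone]
    refine norm_mulVecE_le_of_forall_norm_eq_one (fun w hw hwu => (hbound _ _).1 w hw ?_) hw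
    rwa [← hu', ← neg_neg (st (-j))]
  · refine norm_mulVecE_fwd_mul_pow_le hP hK1 hK hst hgap hC.le hη ht.le htM hs
      (fun j n w hw => ?_) i n hw hws
    rw [← fwd_blockCocycle hst.monotone]
    exact norm_mulVecE_le_of_forall_norm_eq_one
      (fun w hw hws => (hbound _ _).2 w hw (hs' j ▸ hws)) hw

theorem isUH_blockCocycle_iff (hP : ∀ i, IsUnit (P i))
    (hbdd : BddAbove (Set.range fun i => matOpNorm (P i)))
    (hbddinv : BddAbove (Set.range fun i => matOpNorm (P i)⁻¹))
    (hst : StrictMono st) {M : ℕ} (hgap : ∀ j, st (j + 1) ≤ st j + M) :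
    IsUH (blockCocycle P st) ↔ IsUH P := by
  obtain ⟨K₁, hK₁⟩ := hbdd
  obtain ⟨K₂, hK₂⟩ := hbddinv
  refine ⟨isUH_of_isUH_blockCocycle hP (le_max_left 1 (max K₁ K₂))
    (fun i => (hK₁ ⟨i, rfl⟩).trans ((le_max_left _ _).trans (le_max_right _ _)))
    (fun i => (hK₂ ⟨i, rfl⟩).trans ((le_max_right _ _).trans (le_max_right _ _))) hst hgap, ?_⟩
  rintro ⟨u, s, h⟩
  exact ⟨_, _, isUHWith_blockCocycle hP hst h⟩

end Hyperbolicity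

lemma isUnit_propOf (lam : ℝ) (t : ℝ × ℝ × ℝ) : IsUnit (propOf lam t) := by
  rw [Matrix.isUnit_iff_isUnit_det, propOf, propMat, Matrix.det_fin_two_of]
  convert isUnit_one
  ring

lemma fwd_eq_prod_map_reverse {α : Type*} (f : α → Mat₂) (x : ℤ → α) (L : List α) (i₀ : ℤ)
    (hL : ∀ (k : ℕ) (hk : k < L.length), x (i₀ + k) = L.get ⟨k, hk⟩) :
    fwd (fun i => f (x i)) L.length i₀ = (L.map f).reverse.prod := by
  induction L generalizing i₀ with
  | nil => rfl
  | cons a L ih =>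
    have hL' : ∀ (k : ℕ) (hk : k < L.length), x (i₀ + 1 + k) = L.get ⟨k, hk⟩ := fun k hk => by
      simpa [add_assoc, add_comm (1 : ℤ)] using hL (k + 1) (by simpa using hk)
    rw [List.length_cons, fwd_add, Nat.cast_one, ih _ hL', fwd_one, List.map_cons, List.reverse_cons,
      List.prod_append, List.prod_singleton]
    congr 2
    simpa using hL 0 (by simp)

namespace IsConcat

variable {D : ℕ} {B : Fin D → Block} {χ : ℤ → Fin D} {data : ℤ → ℝ × ℝ × ℝ} {st : ℤ → ℤ}

lemma strictMono (h : IsConcat B χ data st) : StrictMono st :=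
  strictMono_int_of_lt_succ fun j => by
    rw [h.2.1 j]
    have := List.length_pos_iff.mpr (B (χ j)).2.1
    omega

lemma apply_succ_le (h : IsConcat B χ data st) (j : ℤ) :
    st (j + 1) ≤ st j + (Finset.univ.sup fun d => (B d).1.length : ℕ) := by
  rw [h.2.1 j]
  have := Finset.le_sup (f := fun d => (B d).1.length) (Finset.mem_univ (χ j))
  omega

lemma blockMat_eq (h : IsConcat B χ data st) (lam : ℝ) :
    (fun j => blockMat lam (B (χ j))) = blockCocycle (fun i => propOf lam (data i)) st := by
  ext1 j
  rw [blockCocycle, blockMat, h.2.1 j, transfer, add_sub_cancel_left, Int.toNat_natCast,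
    fwd_eq_prod_map_reverse _ _ _ _ (h.2.2 j)]

lemma exists_mem (h : IsConcat B χ data st) (i : ℤ) : ∃ d, data i ∈ (B d).1 := by
  obtain ⟨j, hj, hij⟩ := exists_apply_le_lt h.strictMono i
  have hk : (i - st j).toNat < (B (χ j)).1.length := by have := h.2.1 j; omega
  refine ⟨χ j, ?_⟩
  rw [show i = st j + (i - st j).toNat by omega, h.2.2 j _ hk]
  exact List.get_mem _ _

lemma bddAbove_range (h : IsConcat B χ data st) (g : ℝ × ℝ × ℝ → ℝ) :
    BddAbove (Set.range fun i => g (data i)) := by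
  refine ((Set.finite_iUnion fun d => (B d).1.finite_toSet).image g).bddAbove.mono ?_
  rintro _ ⟨i, rfl⟩
  obtain ⟨d, hd⟩ := h.exists_mem i
  exact ⟨data i, Set.mem_iUnion.2 ⟨d, hd⟩, rfl⟩

end IsConcat

theorem stmt_5_general (D : ℕ) (B : Fin D → Block) (lam : ℝ)
    (χ : ℤ → Fin D) (data : ℤ → ℝ × ℝ × ℝ) (st : ℤ → ℤ)
    (hconcat : IsConcat B χ data st) :
    IsUH (fun j => blockMat lam (B (χ j))) ↔ IsUH (fun i => propOf lam (data i)) := by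
  rw [hconcat.blockMat_eq lam]
  exact isUH_blockCocycle_iff (fun i => isUnit_propOf lam (data i))
    (hconcat.bddAbove_range fun t => matOpNorm (propOf lam t))
    (hconcat.bddAbove_range fun t => matOpNorm (propOf lam t)⁻¹) hconcat.strictMono
    hconcat.apply_succ_le

theorem stmt_5 (D : ℕ) (B : Fin D → Block) (lam : ℝ) (hlam : 0 ≤ lam)
    (χ : ℤ → Fin D) (data : ℤ → ℝ × ℝ × ℝ) (st : ℤ → ℤ)
    (hconcat : IsConcat B χ data st) :
    IsUH (fun j => blockMat lam (B (χ j))) ↔ IsUH (fun i => propOf lam (data i)) :=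
  stmt_5_general D B lam χ data st hconcat
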